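/- Let ω be a radial weight on 𝔻 with ω̂(r) = ∫_r^1 ω(s) ds > 0 for all r ∈ [0,1). Then ω ∈ 𝒟̂ (i.e., there exists C ≥ 1 with ω̂(r) ≤ C·ω̂((1+r)/2) for all 0 ≤ r < 1) if and only if there exist C > 0 and β > 0 such that ω̂(r) ≤ C·((1−r)/(1−t))^β·ω̂(t) for all 0 ≤ r ≤ t < 1. -/
import Mathlib


open MeasureTheory Real Set

/-- `Ψ` is essentially increasing on `[0,∞)`. -/
def EssInc (Ψ : ℝ → ℝ) : Prop := ∃ C > (0:ℝ), ∀ x y : ℝ, 0 ≤ x → x ≤ y → Ψ x ≤ C * Ψ y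

/-- `Ψ` is essentially decreasing on `[0,∞)`. -/
def EssDec (Ψ : ℝ → ℝ) : Prop := ∃ C > (0:ℝ), ∀ x y : ℝ, 0 ≤ x → x ≤ y → Ψ y ≤ C * Ψ x

/-- The doubling property `Ψ(x) ≍ Ψ(x²)` on `[0,∞)`. -/
def Doubling (Ψ : ℝ → ℝ) : Prop :=
  ∃ c > (0:ℝ), ∃ C > (0:ℝ), ∀ x : ℝ, 0 ≤ x → c * Ψ (x ^ 2) ≤ Ψ x ∧ Ψ x ≤ C * Ψ (x ^ 2)

/-- The class `𝓛`: positive, essentially monotonic, doubling. -/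
def InL (Ψ : ℝ → ℝ) : Prop :=
  (∀ x : ℝ, 0 ≤ x → 0 < Ψ x) ∧ (EssInc Ψ ∨ EssDec Ψ) ∧ Doubling Ψ

/-- Tail integral of a radial weight. -/
noncomputable def omHat (ω : ℝ → ℝ) (r : ℝ) : ℝ := ∫ s in r..1, ω s

/-- The class `𝒟̂` of radial weights with doubling tails. -/
def Dhat (ω : ℝ → ℝ) : Prop :=
  ∃ C : ℝ, 1 ≤ C ∧ ∀ r ∈ Set.Ico (0:ℝ) 1, omHat ω r ≤ C * omHat ω ((1 + r) / 2)

/-- The class `𝒟̌` of radial weights with reverse-doubling tails. -/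
def Dcheck (ω : ℝ → ℝ) : Prop :=
  ∃ K : ℝ, 1 < K ∧ ∃ C : ℝ, 1 < C ∧ ∀ r ∈ Set.Ico (0:ℝ) 1,
    C * omHat ω (1 - (1 - r) / K) ≤ omHat ω r

lemma omHat_anti_aux (ω : ℝ → ℝ) (hnn : ∀ r ∈ Set.Ico (0:ℝ) 1, 0 ≤ ω r)
    (hint : IntervalIntegrable ω volume 0 1) {a b : ℝ} (ha : 0 ≤ a) (hab : a ≤ b)
    (hb : b ≤ 1) : omHat ω b ≤ omHat ω a := by
  unfold omHat
  have h1 : IntervalIntegrable ω volume a b :=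
    hint.mono_set (by rw [Set.uIcc_of_le hab, Set.uIcc_of_le (by norm_num)]
                      exact Set.Icc_subset_Icc ha hb)
  have h2 : IntervalIntegrable ω volume b 1 :=
    hint.mono_set (by rw [Set.uIcc_of_le hb, Set.uIcc_of_le (by norm_num)]
                      exact Set.Icc_subset_Icc (ha.trans hab) le_rfl)
  have hadd := intervalIntegral.integral_add_adjacent_intervals h1 h2
  have hnneg : 0 ≤ ∫ s in a..b, ω s := by
    apply intervalIntegral.integral_nonneg_of_ae_restrict hab
    have hne : ∀ᵐ x : ℝ ∂volume, x ≠ 1 := by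
      rw [ae_iff]
      simp [measure_singleton]
    filter_upwards [ae_restrict_mem measurableSet_Icc, ae_restrict_of_ae hne] with x hx hx1
    exact hnn x ⟨ha.trans hx.1, lt_of_le_of_ne (hx.2.trans hb) hx1⟩
  linarith

lemma omHat_iterate (ω : ℝ → ℝ) (C : ℝ)
    (h : ∀ r ∈ Set.Ico (0:ℝ) 1, omHat ω r ≤ C * omHat ω ((1 + r) / 2)) (hC : 0 ≤ C) :
    ∀ n : ℕ, ∀ r ∈ Set.Ico (0:ℝ) 1, omHat ω r ≤ C ^ n * omHat ω (1 - (1 - r) / 2 ^ n) := by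
  intro n
  induction n with
  | zero => intro r hr; simp
  | succ n ih =>
    intro r hr
    obtain ⟨h0, h1⟩ := hr
    have hr' : (1 - (1 - r) / 2 ^ n) ∈ Set.Ico (0:ℝ) 1 := by
      constructor
      · have h2n : (1:ℝ) ≤ 2 ^ n := one_le_pow₀ (by norm_num)
        have : (1 - r) / 2 ^ n ≤ 1 := by
          rw [div_le_one (by positivity)]; linarith
        linarith
      · have : 0 < (1 - r) / 2 ^ n := div_pos (by linarith) (by positivity)
        linarith
    have h2 := h _ hr'
    have key : (1 + (1 - (1 - r) / 2 ^ n)) / 2 = 1 - (1 - r) / 2 ^ (n + 1) := by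
      field_simp
      ring
    calc omHat ω r ≤ C ^ n * omHat ω (1 - (1 - r) / 2 ^ n) := ih r ⟨h0, h1⟩
      _ ≤ C ^ n * (C * omHat ω ((1 + (1 - (1 - r) / 2 ^ n)) / 2)) :=
          mul_le_mul_of_nonneg_left h2 (by positivity)
      _ = C ^ (n + 1) * omHat ω (1 - (1 - r) / 2 ^ (n + 1)) := by rw [key]; ring

theorem stmt10 (ω : ℝ → ℝ) (hnn : ∀ r ∈ Set.Ico (0:ℝ) 1, 0 ≤ ω r)
    (hint : IntervalIntegrable ω volume 0 1)
    (hpos : ∀ r ∈ Set.Ico (0:ℝ) 1, 0 < omHat ω r) :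
    Dhat ω ↔ ∃ C > (0:ℝ), ∃ β > (0:ℝ), ∀ r t : ℝ, 0 ≤ r → r ≤ t → t < 1 →
      omHat ω r ≤ C * ((1 - r) / (1 - t)) ^ β * omHat ω t := by
  constructor
  · rintro ⟨C₀, hC₀, hdbl⟩
    set C : ℝ := max C₀ 2 with hCdef
    have hC2 : (2:ℝ) ≤ C := le_max_right _ _
    have hC1 : (1:ℝ) ≤ C := by linarith
    have hCpos : (0:ℝ) < C := by linarith
    have hdbl' : ∀ r ∈ Set.Ico (0:ℝ) 1, omHat ω r ≤ C * omHat ω ((1 + r) / 2) := by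
      intro r hr
      refine (hdbl r hr).trans (mul_le_mul_of_nonneg_right (le_max_left _ _) ?_)
      exact (hpos _ ⟨by linarith [hr.1], by linarith [hr.2]⟩).le
    set β : ℝ := Real.logb 2 C with hβdef
    have hβpos : 0 < β := Real.logb_pos (by norm_num) (by linarith)
    refine ⟨C, hCpos, β, hβpos, ?_⟩
    intro r t h0r hrt ht1
    have h1t : 0 < 1 - t := by linarith
    have h1r : 0 < 1 - r := by linarith
    set q : ℝ := (1 - r) / (1 - t) with hqdef
    have hq1 : 1 ≤ q := (one_le_div h1t).2 (by linarith)
    have hqpos : 0 < q := by linarith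
    set L : ℝ := Real.logb 2 q with hLdef
    have hL0 : 0 ≤ L := Real.logb_nonneg (by norm_num) hq1
    set n : ℕ := ⌈L⌉₊ with hndef
    have hnL : L ≤ (n:ℝ) := Nat.le_ceil L
    have hnL1 : (n:ℝ) < L + 1 := Nat.ceil_lt_add_one hL0
    have h2n : q ≤ 2 ^ n := by
      calc q = (2:ℝ) ^ L := (Real.rpow_logb (by norm_num) (by norm_num) hqpos).symm
        _ ≤ (2:ℝ) ^ (n:ℝ) := Real.rpow_le_rpow_of_exponent_le (by norm_num) hnL
        _ = 2 ^ n := by rw [Real.rpow_natCast]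
    have hst : t ≤ 1 - (1 - r) / 2 ^ n := by
      have : (1 - r) / 2 ^ n ≤ 1 - t := by
        rw [div_le_iff₀ (by positivity)]
        calc 1 - r = q * (1 - t) := (div_mul_cancel₀ _ (ne_of_gt h1t)).symm
          _ ≤ (1 - t) * 2 ^ n := by nlinarith
      linarith
    have hs1 : 1 - (1 - r) / 2 ^ n < 1 := by
      have : 0 < (1 - r) / 2 ^ n := div_pos h1r (by positivity)
      linarith
    have hiter := omHat_iterate ω C hdbl' (by linarith) n r ⟨h0r, by linarith⟩
    have hanti : omHat ω (1 - (1 - r) / 2 ^ n) ≤ omHat ω t :=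
      omHat_anti_aux ω hnn hint (by linarith) hst (by linarith)
    have hCn : C ^ n ≤ C * q ^ β := by
      have h1 : C ^ n = C ^ (n:ℝ) := by rw [Real.rpow_natCast]
      have h2 : C ^ (n:ℝ) ≤ C ^ (L + 1) :=
        Real.rpow_le_rpow_of_exponent_le hC1 (by linarith)
      have h3 : C ^ (L + 1) = C * C ^ L := by
        rw [Real.rpow_add hCpos, Real.rpow_one]; ring
      have h4 : C ^ L = q ^ β := by
        rw [Real.rpow_def_of_pos hCpos, Real.rpow_def_of_pos hqpos]
        congr 1
        rw [hβdef, hLdef, Real.logb, Real.logb]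
        field_simp
      rw [h1]; rw [h3, h4] at h2; exact h2
    have hωt : 0 < omHat ω t := hpos t ⟨by linarith, ht1⟩
    calc omHat ω r ≤ C ^ n * omHat ω (1 - (1 - r) / 2 ^ n) := hiter
      _ ≤ C ^ n * omHat ω t := mul_le_mul_of_nonneg_left hanti (by positivity)
      _ ≤ C * q ^ β * omHat ω t := mul_le_mul_of_nonneg_right hCn hωt.le
  · rintro ⟨C, hCpos, β, hβpos, h⟩
    refine ⟨max 1 (C * 2 ^ β), le_max_left _ _, ?_⟩
    intro r hr
    obtain ⟨h0, h1⟩ := hr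
    have ht1 : (1 + r) / 2 < 1 := by linarith
    have hkey := h r ((1 + r) / 2) h0 (by linarith) ht1
    have hq : (1 - r) / (1 - (1 + r) / 2) = 2 := by
      have h1r : (1:ℝ) - r ≠ 0 := by linarith
      rw [show (1:ℝ) - (1 + r) / 2 = (1 - r) / 2 by ring]
      field_simp
    rw [hq] at hkey
    have hωt : 0 < omHat ω ((1 + r) / 2) := hpos _ ⟨by linarith, ht1⟩
    calc omHat ω r ≤ C * 2 ^ β * omHat ω ((1 + r) / 2) := hkey
      _ ≤ max 1 (C * 2 ^ β) * omHat ω ((1 + r) / 2) :=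
        mul_le_mul_of_nonneg_right (le_max_right _ _) hωt.le
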